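/- arXiv:2306.00384 — 2 statements merged into one kernel-verified Lean document; each statement's English description precedes it below -/
import Mathlib

section
/- Every edge of a family F of r-subsets of [n] contains some member of its flower base BF; consequently |F| ≤ Σ_{B ∈ BF} binom(n - |B|, r - |B|). -/
open Finset

def FamIntersecting (F : Finset (Finset ℕ)) : Prop :=
  ∀ A ∈ F, ∀ B ∈ F, (A ∩ B).Nonempty

def maxDeg (F : Finset (Finset ℕ)) : ℕ :=
  (F.biUnion id).sup fun x => (F.filter fun E => x ∈ E).card

def IsFlower (α : ℝ) (S : Finset (Finset ℕ)) (Y : Finset ℕ) : Prop :=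
  S.Nonempty ∧ (∀ A ∈ S, Y ⊆ A) ∧ (∀ x, (∀ A ∈ S, x ∈ A) → x ∈ Y) ∧
    ∀ T : Finset ℕ, (T.card : ℝ) ≤ α → ∃ A ∈ S, (A \ Y) ∩ T = ∅

def IsFlowerCore (α : ℝ) (F : Finset (Finset ℕ)) (Y : Finset ℕ) : Prop :=
  Y.Nonempty ∧ ∃ S ⊆ F, IsFlower α S Y

open scoped Classical in
noncomputable def flowerBase (α : ℝ) (F : Finset (Finset ℕ)) : Finset (Finset ℕ) :=
  (F.biUnion Finset.powerset).filter fun B =>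
    (IsFlowerCore α F B ∨ B ∈ F) ∧
    ∀ B', (IsFlowerCore α F B' ∨ B' ∈ F) → B' ⊆ B → B' = B

noncomputable def tau (F : Finset (Finset ℕ)) : ℕ :=
  sInf {k | ∃ T : Finset ℕ, T.card = k ∧ ∀ A ∈ F, (A ∩ T).Nonempty}

/-!
Every edge `E` of `F` is itself a candidate for the flower base (`F ⊆ F* ∪ F`), so the
inclusion-minimal candidates below `E` cover it. Hence `|F|` is at most the sum, over `B ∈ BF`,
of the number of `r`-subsets of `[n]` containing `B`.
-/

theorem exists_mem_flowerBase_subset {α : ℝ} {F : Finset (Finset ℕ)} {E : Finset ℕ}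
    (hE : E ∈ F) : ∃ B ∈ flowerBase α F, B ⊆ E := by
  obtain ⟨B, hBE, hBmin⟩ := exists_minimal_le_of_wellFoundedLT
    (fun B => IsFlowerCore α F B ∨ B ∈ F) E (Or.inr hE)
  refine ⟨B, ?_, hBE⟩
  simp only [flowerBase, mem_filter, mem_biUnion, mem_powerset]
  exact ⟨⟨E, hE, hBE⟩, hBmin.1, fun B' hB' hB'B => le_antisymm hB'B (hBmin.2 hB' hB'B)⟩

theorem exists_mem_superset_of_mem_flowerBase {α : ℝ} {F : Finset (Finset ℕ)}
    {B : Finset ℕ} (hB : B ∈ flowerBase α F) : ∃ E ∈ F, B ⊆ E := by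
  classical
  simpa only [flowerBase, mem_filter, mem_biUnion, mem_powerset] using (mem_filter.1 hB).1

theorem card_le_sum_card_filter_superset {ι : Type*} [DecidableEq ι]
    {F 𝓑 : Finset (Finset ι)} (hcover : ∀ E ∈ F, ∃ B ∈ 𝓑, B ⊆ E) :
    F.card ≤ ∑ B ∈ 𝓑, (F.filter (B ⊆ ·)).card := by
  refine le_trans (card_le_card fun E hE => ?_) card_biUnion_le
  obtain ⟨B, hB, hBE⟩ := hcover E hE
  exact mem_biUnion.2 ⟨B, hB, mem_filter.2 ⟨hE, hBE⟩⟩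

theorem card_filter_superset_le_choose {ι : Type*} [DecidableEq ι] {r : ℕ}
    {U B : Finset ι} {F : Finset (Finset ι)} (hBU : B ⊆ U)
    (hF : ∀ E ∈ F, E ⊆ U ∧ E.card = r) :
    (F.filter (B ⊆ ·)).card ≤ (U.card - B.card).choose (r - B.card) := by
  have hsub : F.filter (B ⊆ ·) ⊆
      ((U \ B).powersetCard (r - B.card)).image (· ∪ B) := by
    intro E hE
    obtain ⟨hEF, hBE⟩ := mem_filter.1 hE
    refine mem_image.2 ⟨E \ B, mem_powersetCard.2 ⟨sdiff_subset_sdiff (hF E hEF).1 le_rfl, ?_⟩,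
      sdiff_union_of_subset hBE⟩
    rw [card_sdiff_of_subset hBE, (hF E hEF).2]
  calc (F.filter (B ⊆ ·)).card
      ≤ ((U \ B).powersetCard (r - B.card)).card := (card_le_card hsub).trans card_image_le
    _ = (U.card - B.card).choose (r - B.card) := by
      rw [card_powersetCard, card_sdiff_of_subset hBU]

theorem stmt7_general (n r : ℕ) (α : ℝ) (F : Finset (Finset ℕ))
    (hF : ∀ E ∈ F, E ⊆ Finset.range n ∧ E.card = r) :
    (∀ E ∈ F, ∃ B ∈ flowerBase α F, B ⊆ E) ∧
    F.card ≤ ∑ B ∈ flowerBase α F, Nat.choose (n - B.card) (r - B.card) := by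
  have hcover : ∀ E ∈ F, ∃ B ∈ flowerBase α F, B ⊆ E := fun E hE =>
    exists_mem_flowerBase_subset hE
  refine ⟨hcover, (card_le_sum_card_filter_superset hcover).trans (sum_le_sum fun B hB => ?_)⟩
  obtain ⟨E, hEF, hBE⟩ := exists_mem_superset_of_mem_flowerBase hB
  simpa only [card_range] using card_filter_superset_le_choose (hBE.trans (hF E hEF).1) hF

theorem stmt7 (n r : ℕ) (α : ℝ) (F : Finset (Finset ℕ))
    (hF : ∀ E ∈ F, E ⊆ Finset.range n ∧ E.card = r)
    (hα : (tau F : ℝ) ≤ α) :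
    (∀ E ∈ F, ∃ B ∈ flowerBase α F, B ⊆ E) ∧
    F.card ≤ ∑ B ∈ flowerBase α F, Nat.choose (n - B.card) (r - B.card) :=
  stmt7_general n r α F hF
end

section
/- Let r ≥ 3, 0 < ε < 1, and 0 ≤ t ≤ ε·binom(n-3, r-2). For n sufficiently large, if F ⊆ binom([n], r) is intersecting with diversity d(F) = |F| - Δ(F) = binom(n-3, r-2) - t, then there exist three vertices x, y, z such that every edge of F contains at least two of {x,y,z}, and at most 3t edges can be added to F to obtain a family G with {E : |E ∩ {x,y,z}| = 2} ⊆ G ⊆ {E : |E ∩ {x,y,z}| ≥ 2}. -/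
open Finset

/-!
Put `C = (n-3).choose (r-2)` and `K = (n-3).choose (r-3)`, which bounds the number of edges
through any three points. Every vertex misses at least `|F| - Δ(F) = C - t ≥ (1 - ε) C` edges,
and `(1 - ε) C > r³ K` for large `n` because `C / K = (n - r) / (r - 2)`. By Frankl's branching
argument, if every set `B ⊇ A` with `|B| < 3` misses some edge, then at most `r^(3 - |A|) K`
edges contain `A`. Applied to such large subfamilies it yields successively a cover `{y, w}`
of `F`, a vertex `v` in every edge missing `w`, and the cover `{y, v}`; hence every edge meets
`T = {y, w, v}` in at least two points. Double counting `∑ |E ∩ T| ≤ 3 Δ(F)` shows that at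
least `3 (C - t)` edges of `F` meet `T` in exactly two points, while there are at most `3 C`
such `r`-sets.
-/

namespace Finset

variable {α : Type*} [DecidableEq α]

theorem card_filter_subset_le {S : Finset (Finset α)} {X : Finset α} {r : ℕ}
    (hS : S ⊆ X.powersetCard r) (A : Finset α) :
    #(S.filter (A ⊆ ·)) ≤ (#X - #A).choose (r - #A) := by
  obtain hempty | ⟨E, hE⟩ := (S.filter (A ⊆ ·)).eq_empty_or_nonempty
  · simp [hempty]
  have hAX : A ⊆ X := (mem_filter.1 hE).2.trans (mem_powersetCard.1 (hS (mem_filter.1 hE).1)).1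
  calc #(S.filter (A ⊆ ·))
      ≤ #((X \ A).powersetCard (r - #A)) := by
        refine card_le_card_of_injOn (· \ A) (fun E hE => ?_) (fun E hE E' hE' h => ?_)
        · obtain ⟨hES, hAE⟩ := mem_filter.1 hE
          obtain ⟨hEX, hEr⟩ := mem_powersetCard.1 (hS hES)
          refine mem_powersetCard.2 ⟨sdiff_subset_sdiff hEX le_rfl, ?_⟩
          rw [card_sdiff_of_subset hAE, hEr]
        · rw [← sdiff_union_of_subset (mem_filter.1 hE).2,
            ← sdiff_union_of_subset (mem_filter.1 hE').2]
          exact congrArg (· ∪ A) h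
    _ = (#X - #A).choose (r - #A) := by rw [card_powersetCard, card_sdiff_of_subset hAX]

/-- Frankl's branching: an edge `F` disjoint from `A` meets every `G ⊇ A`, so such `G` contain
`A ∪ {x}` for one of the at most `r` points `x ∈ F`. -/
theorem card_filter_subset_le_pow_mul {𝒢 𝓕 : Finset (Finset α)} {r s K : ℕ}
    (h𝓕 : ∀ F ∈ 𝓕, #F ≤ r) (hcross : ∀ G ∈ 𝒢, ∀ F ∈ 𝓕, ¬Disjoint G F)
    (hK : ∀ B : Finset α, #B = s → #(𝒢.filter (B ⊆ ·)) ≤ K) (A : Finset α) (hA : #A ≤ s)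
    (hτ : ∀ B, A ⊆ B → #B < s → ∃ F ∈ 𝓕, Disjoint F B) :
    #(𝒢.filter (A ⊆ ·)) ≤ r ^ (s - #A) * K := by
  induction hj : s - #A generalizing A with
  | zero => simpa using hK A (by omega)
  | succ j ih =>
    obtain ⟨F, hF, hFA⟩ := hτ A le_rfl (by omega)
    have hcover : 𝒢.filter (A ⊆ ·) ⊆ F.biUnion fun x => 𝒢.filter (insert x A ⊆ ·) := by
      intro G hG
      obtain ⟨hG𝒢, hAG⟩ := mem_filter.1 hG
      obtain ⟨x, hxG, hxF⟩ := not_disjoint_iff.1 (hcross G hG𝒢 F hF)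
      exact mem_biUnion.2 ⟨x, hxF, mem_filter.2 ⟨hG𝒢, insert_subset hxG hAG⟩⟩
    have hbranch : ∀ x ∈ F, #(𝒢.filter (insert x A ⊆ ·)) ≤ r ^ j * K := by
      intro x hx
      have hxA : x ∉ A := disjoint_left.1 hFA hx
      have hcard := card_insert_of_notMem hxA
      exact ih _ (by omega) (fun B hB => hτ B ((subset_insert x A).trans hB)) (by omega)
    calc #(𝒢.filter (A ⊆ ·)) ≤ #F * (r ^ j * K) :=
          (card_le_card hcover).trans (card_biUnion_le_card_mul _ _ _ hbranch)
      _ ≤ r ^ (j + 1) * K := by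
        rw [pow_succ', mul_assoc]
        exact Nat.mul_le_mul_right _ (h𝓕 F hF)

theorem card_filter_card_inter_eq_le {X T : Finset α} {r k : ℕ}
    (hTX : T ⊆ X) (hT : #T = k + 1) :
    #((X.powersetCard r).filter fun E => #(E ∩ T) = k) ≤
      (k + 1) * (#X - (k + 1)).choose (r - k) := by
  have hcover : (X.powersetCard r).filter (fun E => #(E ∩ T) = k) ⊆
      T.biUnion fun z => ((X.erase z).powersetCard r).filter (T.erase z ⊆ ·) := by
    intro E hE
    obtain ⟨hEX, hET⟩ := mem_filter.1 hE
    obtain ⟨z, hzT, hzE⟩ : ∃ z ∈ T, z ∉ E := by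
      by_contra! hTE
      rw [inter_eq_right.2 hTE] at hET
      omega
    have hETz : E ∩ T = T.erase z :=
      eq_of_subset_of_card_le
        (fun x hx =>
          mem_erase.2 ⟨ne_of_mem_of_not_mem (mem_inter.1 hx).1 hzE, (mem_inter.1 hx).2⟩)
        (by rw [card_erase_of_mem hzT]; omega)
    obtain ⟨hEX, hEr⟩ := mem_powersetCard.1 hEX
    exact mem_biUnion.2 ⟨z, hzT, mem_filter.2
      ⟨mem_powersetCard.2 ⟨subset_erase.2 ⟨hEX, hzE⟩, hEr⟩, hETz ▸ inter_subset_left⟩⟩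
  refine (card_le_card hcover).trans ((card_biUnion_le_card_mul _ _ _ fun z hz => ?_).trans_eq
    (by rw [hT]))
  have hbound :=
    card_filter_subset_le (subset_refl ((X.erase z).powersetCard r)) (T.erase z)
  rwa [card_erase_of_mem (hTX hz), card_erase_of_mem hz, hT, Nat.add_sub_cancel, Nat.sub_sub,
    add_comm 1 k] at hbound

theorem exists_subset_pair_of_card_le_two {B : Finset α} {w : α} (hB : #B ≤ 2) (hw : w ∈ B) :
    ∃ u, B ⊆ {w, u} := by
  have : Nonempty α := ⟨w⟩
  obtain ⟨u, hu⟩ := card_le_one_iff_subset_singleton.1 (by rw [card_erase_of_mem hw]; omega)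
  exact ⟨u, (insert_erase hw).symm.subset.trans (insert_subset_insert w hu)⟩

section Stability

variable {F : Finset (Finset α)} {r K : ℕ}

theorem exists_pair_cover (hF : (F : Set (Finset α)).Intersecting) (hr : ∀ E ∈ F, #E ≤ r)
    (hK : ∀ B : Finset α, #B = 3 → #(F.filter (B ⊆ ·)) ≤ K) (hlarge : r ^ 3 * K < #F) :
    ∃ y w, ∀ E ∈ F, y ∈ E ∨ w ∈ E := by
  by_contra! hno
  have hbound := card_filter_subset_le_pow_mul hr (fun G hG E hE => hF hG hE) hK ∅ (by simp)
    fun B _ hB => by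
      obtain rfl | ⟨w, hw⟩ := B.eq_empty_or_nonempty
      · obtain ⟨E, hE⟩ := card_pos.1 (by omega : 0 < #F)
        exact ⟨E, hE, disjoint_empty_right E⟩
      obtain ⟨u, hBwu⟩ := exists_subset_pair_of_card_le_two (by omega) hw
      obtain ⟨E, hE, hwE, huE⟩ := hno w u
      exact ⟨E, hE, disjoint_of_subset_right hBwu (by simp [hwE, huE])⟩
  rw [filter_true_of_mem fun E _ => empty_subset E, card_empty, Nat.sub_zero] at hbound
  omega

theorem exists_mem_of_notMem_of_pair_cover {y w : α} (hF : (F : Set (Finset α)).Intersecting)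
    (hr : ∀ E ∈ F, #E ≤ r) (hK : ∀ B : Finset α, #B = 3 → #(F.filter (B ⊆ ·)) ≤ K)
    (hcov : ∀ E ∈ F, y ∈ E ∨ w ∈ E) (hP : ∃ E ∈ F, w ∉ E)
    (hQ : r ^ 2 * K < #(F.filter (y ∉ ·))) :
    ∃ v, v ≠ y ∧ v ≠ w ∧ ∀ E ∈ F, w ∉ E → v ∈ E := by
  by_contra! hno
  have hQw : (F.filter (y ∉ ·)).filter ({w} ⊆ ·) = F.filter (y ∉ ·) :=
    filter_true_of_mem fun E hE =>
      singleton_subset_iff.2 ((hcov E (mem_filter.1 hE).1).resolve_left (mem_filter.1 hE).2)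
  -- an edge avoiding `y` meets every edge avoiding `w` outside `y`
  have hbound := card_filter_subset_le_pow_mul (𝓕 := (F.filter (w ∉ ·)).image (·.erase y))
    (fun E' hE' => by
      obtain ⟨E, hE, rfl⟩ := mem_image.1 hE'
      exact (card_erase_le).trans (hr E (mem_filter.1 hE).1))
    (fun G hG E' hE' => by
      obtain ⟨E, hE, rfl⟩ := mem_image.1 hE'
      obtain ⟨x, hxG, hxE⟩ := not_disjoint_iff.1 (hF (mem_filter.1 hG).1 (mem_filter.1 hE).1)
      have hxy : x ≠ y := fun h => (mem_filter.1 hG).2 (h ▸ hxG)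
      exact not_disjoint_iff.2 ⟨x, hxG, mem_erase.2 ⟨hxy, hxE⟩⟩)
    (fun B hB =>
      (card_le_card (filter_subset_filter _ (filter_subset (y ∉ ·) F))).trans (hK B hB))
    {w} (by simp)
    (fun B hwB hB => by
      obtain ⟨u, hBwu⟩ :=
        exists_subset_pair_of_card_le_two (by omega) (hwB (mem_singleton_self w))
      obtain ⟨E, hE, hwE, huE⟩ : ∃ E ∈ F, w ∉ E ∧ u ∉ E.erase y := by
        by_cases hu : u = y ∨ u = w
        · obtain ⟨E, hE, hwE⟩ := hP
          refine ⟨E, hE, hwE, ?_⟩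
          rcases hu with rfl | rfl <;> simp [hwE]
        · push Not at hu
          obtain ⟨E, hE, hwE, huE⟩ := hno u hu.1 hu.2
          exact ⟨E, hE, hwE, fun h => huE (mem_of_mem_erase h)⟩
      refine ⟨E.erase y, mem_image_of_mem _ (mem_filter.2 ⟨hE, hwE⟩), ?_⟩
      exact disjoint_of_subset_right hBwu (by simp [huE, hwE]))
  rw [hQw, card_singleton, show 3 - 1 = 2 from rfl] at hbound
  omega

theorem pair_cover_of_lt_card_filter_pair_subset {y v : α}
    (hF : (F : Set (Finset α)).Intersecting) (hr : ∀ E ∈ F, #E ≤ r)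
    (hK : ∀ B : Finset α, #B = 3 → #(F.filter (B ⊆ ·)) ≤ K) (hyv : y ≠ v)
    (hlink : r * K < #(F.filter ({y, v} ⊆ ·))) :
    ∀ E ∈ F, y ∈ E ∨ v ∈ E := by
  by_contra! ⟨E, hE, hyE, hvE⟩
  have hbound := card_filter_subset_le_pow_mul hr (fun G hG E hE => hF hG hE) hK {y, v}
    (by rw [card_pair hyv]; omega) fun B hyvB hB => ⟨E, hE, by
      rw [← eq_of_subset_of_card_le hyvB (by rw [card_pair hyv]; omega)]
      simp [hyE, hvE]⟩
  rw [card_pair hyv, pow_one] at hbound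
  omega

theorem exists_triple_two_le_card_inter [Nonempty α] {X : Finset α}
    (hF : (F : Set (Finset α)).Intersecting) (hFX : F ⊆ X.powersetCard r)
    (hK : ∀ B : Finset α, #B = 3 → #(F.filter (B ⊆ ·)) ≤ K)
    (hmiss : ∀ a, r ^ 3 * K < #(F.filter (a ∉ ·))) :
    ∃ x ∈ X, ∃ y ∈ X, ∃ z ∈ X, x ≠ y ∧ x ≠ z ∧ y ≠ z ∧
      ∀ E ∈ F, 2 ≤ #(E ∩ {x, y, z}) := by
  have hr : ∀ E ∈ F, #E ≤ r := fun E hE => (mem_powersetCard.1 (hFX hE)).2.le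
  have hEX : ∀ E ∈ F, E ⊆ X := fun E hE => (mem_powersetCard.1 (hFX hE)).1
  have hpow : r * K ≤ r ^ 3 * K ∧ r ^ 2 * K ≤ r ^ 3 * K := by
    rcases Nat.eq_zero_or_pos r with rfl | hr0
    · simp
    · exact ⟨Nat.mul_le_mul_right K (Nat.le_self_pow (by norm_num) r),
        Nat.mul_le_mul_right K (Nat.pow_le_pow_right hr0 (by norm_num))⟩
  have hmiss' : ∀ a, ∃ E ∈ F, a ∉ E := fun a => by
    obtain ⟨E, hE⟩ := card_pos.1 (by have := hmiss a; omega : 0 < #(F.filter (a ∉ ·)))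
    exact ⟨E, (mem_filter.1 hE).1, (mem_filter.1 hE).2⟩
  obtain ⟨y, w, hyw⟩ := exists_pair_cover hF hr hK
    ((hmiss (Classical.arbitrary α)).trans_le (card_le_card (filter_subset _ F)))
  obtain ⟨v, hvy, hvw, hvP⟩ := exists_mem_of_notMem_of_pair_cover hF hr hK hyw (hmiss' w)
    (hpow.2.trans_lt (hmiss y))
  have hyP : ∀ E ∈ F, w ∉ E → y ∈ E := fun E hE hwE => (hyw E hE).resolve_right hwE
  have hyv := pair_cover_of_lt_card_filter_pair_subset hF hr hK (Ne.symm hvy) <|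
    hpow.1.trans_lt <| (hmiss w).trans_le <| card_le_card fun E hE => by
      obtain ⟨hE, hwE⟩ := mem_filter.1 hE
      exact mem_filter.2
        ⟨hE, insert_subset (hyP E hE hwE) (singleton_subset_iff.2 (hvP E hE hwE))⟩
  obtain ⟨Ep, hEp, hwEp⟩ := hmiss' w
  obtain ⟨Eq, hEq, hyEq⟩ := hmiss' y
  have hwEq : w ∈ Eq := (hyw Eq hEq).resolve_left hyEq
  have hyw_ne : y ≠ w := fun h => hwEp (h ▸ hyP Ep hEp hwEp)
  refine ⟨y, hEX Ep hEp (hyP Ep hEp hwEp), w, hEX Eq hEq hwEq, v, hEX Ep hEp (hvP Ep hEp hwEp),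
    hyw_ne, hvy.symm, hvw.symm, fun E hE => ?_⟩
  have two_le {a b : α} (hab : a ≠ b) (ha : a ∈ E ∩ {y, w, v}) (hb : b ∈ E ∩ {y, w, v}) :
      2 ≤ #(E ∩ {y, w, v}) := one_lt_card.2 ⟨a, ha, b, hb, hab⟩
  by_cases hwE : w ∈ E
  · rcases hyv E hE with hyE | hvE
    · exact two_le hyw_ne (by simp [hyE]) (by simp [hwE])
    · exact two_le hvw.symm (by simp [hwE]) (by simp [hvE])
  · exact two_le hvy.symm (by simp [hyP E hE hwE]) (by simp [hvP E hE hwE])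

end Stability

end Finset

theorem FamIntersecting.intersecting {F : Finset (Finset ℕ)} (hF : FamIntersecting F) :
    (F : Set (Finset ℕ)).Intersecting :=
  fun A hA B hB => not_disjoint_iff_nonempty_inter.2 (hF A hA B hB)

theorem card_filter_mem_le_maxDeg (F : Finset (Finset ℕ)) (a : ℕ) :
    #(F.filter (a ∈ ·)) ≤ maxDeg F := by
  by_cases ha : a ∈ F.biUnion id
  · exact le_sup (f := fun x => #(F.filter (x ∈ ·))) ha
  · have hempty : F.filter (a ∈ ·) = ∅ :=
      filter_eq_empty_iff.2 fun E hE haE => ha (mem_biUnion.2 ⟨E, hE, haE⟩)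
    simp [hempty]

theorem card_le_maxDeg_add_card_filter_notMem (F : Finset (Finset ℕ)) (a : ℕ) :
    #F ≤ maxDeg F + #(F.filter (a ∉ ·)) := by
  rw [← card_filter_add_card_filter_not (a ∈ ·)]
  exact Nat.add_le_add_right (card_filter_mem_le_maxDeg F a) _

theorem mul_card_le_mul_maxDeg_add_card_filter {F : Finset (Finset ℕ)} {T : Finset ℕ} {k : ℕ}
    (hT : #T = k + 1) (hF : ∀ E ∈ F, k ≤ #(E ∩ T)) :
    (k + 1) * #F ≤ (k + 1) * maxDeg F + #(F.filter fun E => #(E ∩ T) = k) := by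
  have hdeg : ∑ E ∈ F, #(T ∩ E) ≤ #T * maxDeg F :=
    sum_card_inter_le fun a _ => card_filter_mem_le_maxDeg F a
  calc (k + 1) * #F = ∑ _E ∈ F, (k + 1) := by rw [sum_const, smul_eq_mul, mul_comm]
    _ ≤ ∑ E ∈ F, (#(T ∩ E) + if #(E ∩ T) = k then 1 else 0) := sum_le_sum fun E hE => by
        rw [inter_comm T E]
        have := hF E hE
        split_ifs <;> omega
    _ ≤ (k + 1) * maxDeg F + #(F.filter fun E => #(E ∩ T) = k) := by
        rw [sum_add_distrib, ← card_filter, ← hT]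
        omega

theorem card_filter_sdiff_add_mul_card_le {F : Finset (Finset ℕ)} {X T : Finset ℕ} {r k : ℕ}
    (hFX : F ⊆ X.powersetCard r) (hTX : T ⊆ X) (hT : #T = k + 1)
    (hF : ∀ E ∈ F, k ≤ #(E ∩ T)) :
    #((X.powersetCard r).filter (fun E => #(E ∩ T) = k) \ F) + (k + 1) * #F ≤
      (k + 1) * maxDeg F + (k + 1) * (#X - (k + 1)).choose (r - k) := by
  have hsplit := card_sdiff_add_card_inter ((X.powersetCard r).filter fun E => #(E ∩ T) = k) F
  have hF2 : #(F.filter fun E => #(E ∩ T) = k) ≤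
      #(((X.powersetCard r).filter fun E => #(E ∩ T) = k) ∩ F) :=
    card_le_card fun E hE => by
      obtain ⟨hE, hET⟩ := mem_filter.1 hE
      exact mem_inter.2 ⟨mem_filter.2 ⟨hFX hE, hET⟩, hE⟩
  have hcount := card_filter_card_inter_eq_le (r := r) hTX hT
  have hdouble := mul_card_le_mul_maxDeg_add_card_filter hT hF
  omega

theorem eventually_mul_choose_lt_mul_choose_succ (k : ℕ) (c : ℝ) {δ : ℝ} (hδ : 0 < δ) :
    ∀ᶠ m : ℕ in Filter.atTop, c * m.choose k < δ * m.choose (k + 1) := by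
  filter_upwards [Filter.eventually_gt_atTop (k + ⌈c * (k + 1) / δ⌉₊)] with m hm
  have hK : (0 : ℝ) < m.choose k := by exact_mod_cast Nat.choose_pos (by omega)
  have hid : (m.choose (k + 1) : ℝ) * (k + 1) = m.choose k * (m - k : ℕ) := by
    exact_mod_cast Nat.choose_succ_right_eq m k
  have hmk : c * (k + 1) < δ * (m - k : ℕ) := by
    have : c * (k + 1) / δ < (m - k : ℕ) :=
      (Nat.le_ceil _).trans_lt (by exact_mod_cast (by omega : ⌈c * (k + 1) / δ⌉₊ < m - k))
    rw [div_lt_iff₀ hδ] at this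
    linarith
  refine lt_of_mul_lt_mul_right (a := (k + 1 : ℝ)) ?_ (by positivity)
  calc c * m.choose k * (k + 1) = m.choose k * (c * (k + 1)) := by ring
    _ < m.choose k * (δ * (m - k : ℕ)) := mul_lt_mul_of_pos_left hmk hK
    _ = δ * m.choose (k + 1) * (k + 1) := by linear_combination (-δ) * hid

theorem exists_forall_pow_mul_choose_add_lt {r : ℕ} (hr : 3 ≤ r) {ε : ℝ} (hε : ε < 1) :
    ∃ N, ∀ n ≥ N, ∀ t : ℕ, (t : ℝ) ≤ ε * (n - 3).choose (r - 2) →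
      r ^ 3 * (n - 3).choose (r - 3) + t < (n - 3).choose (r - 2) := by
  obtain ⟨M, hM⟩ := Filter.eventually_atTop.1
    (eventually_mul_choose_lt_mul_choose_succ (r - 3) (r ^ 3) (sub_pos.2 hε))
  refine ⟨M + 3, fun n hn t ht => ?_⟩
  have h := hM (n - 3) (by omega)
  rw [show r - 3 + 1 = r - 2 by omega] at h
  exact_mod_cast (show ((r ^ 3 * (n - 3).choose (r - 3) + t : ℕ) : ℝ) < (n - 3).choose (r - 2) by
    push_cast; linarith)

theorem stmt16_general (r : ℕ) (hr : 3 ≤ r) (ε : ℝ) (hε2 : ε < 1) :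
    ∃ N : ℕ, ∀ n ≥ N, ∀ t : ℕ, (t : ℝ) ≤ ε * Nat.choose (n - 3) (r - 2) →
    ∀ F ⊆ (Finset.range n).powersetCard r, FamIntersecting F →
    F.card + t = maxDeg F + Nat.choose (n - 3) (r - 2) →
    ∃ x ∈ Finset.range n, ∃ y ∈ Finset.range n, ∃ z ∈ Finset.range n,
      x ≠ y ∧ x ≠ z ∧ y ≠ z ∧
      (∀ E ∈ F, 2 ≤ (E ∩ ({x, y, z} : Finset ℕ)).card) ∧
      ∃ G : Finset (Finset ℕ), F ⊆ G ∧ (G \ F).card ≤ 3 * t ∧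
        ((Finset.range n).powersetCard r
          |>.filter fun E => (E ∩ ({x, y, z} : Finset ℕ)).card = 2) ⊆ G ∧
        G ⊆ ((Finset.range n).powersetCard r
          |>.filter fun E => 2 ≤ (E ∩ ({x, y, z} : Finset ℕ)).card) := by
  obtain ⟨N, hN⟩ := exists_forall_pow_mul_choose_add_lt hr hε2
  refine ⟨N, fun n hn t ht F hF hFint hdiv => ?_⟩
  have hK : ∀ B : Finset ℕ, #B = 3 → #(F.filter (B ⊆ ·)) ≤ (n - 3).choose (r - 3) :=
    fun B hB => by simpa [hB] using card_filter_subset_le hF B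
  have hmiss : ∀ a, r ^ 3 * (n - 3).choose (r - 3) < #(F.filter (a ∉ ·)) := fun a => by
    have hdeg := card_le_maxDeg_add_card_filter_notMem F a
    have hlarge := hN n hn t ht
    omega
  obtain ⟨x, hx, y, hy, z, hz, hxy, hxz, hyz, hcov⟩ :=
    exists_triple_two_le_card_inter hFint.intersecting hF hK hmiss
  have hT : #({x, y, z} : Finset ℕ) = 3 := card_eq_three.2 ⟨x, y, z, hxy, hxz, hyz, rfl⟩
  have hTX : ({x, y, z} : Finset ℕ) ⊆ range n := by simp [insert_subset_iff, hx, hy, hz]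
  have hcompletion := card_filter_sdiff_add_mul_card_le hF hTX hT hcov
  rw [card_range, show n - (2 + 1) = n - 3 from rfl] at hcompletion
  refine ⟨x, hx, y, hy, z, hz, hxy, hxz, hyz, hcov, F ∪ _, subset_union_left, ?_,
    subset_union_right, union_subset (fun E hE => mem_filter.2 ⟨hF hE, hcov E hE⟩)
      fun E hE => mem_filter.2 ⟨(mem_filter.1 hE).1, (mem_filter.1 hE).2.ge⟩⟩
  rw [union_sdiff_left]
  omega

theorem stmt16 (r : ℕ) (hr : 3 ≤ r) (ε : ℝ) (hε1 : 0 < ε) (hε2 : ε < 1) :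
    ∃ N : ℕ, ∀ n ≥ N, ∀ t : ℕ, (t : ℝ) ≤ ε * Nat.choose (n - 3) (r - 2) →
    ∀ F ⊆ (Finset.range n).powersetCard r, FamIntersecting F →
    F.card + t = maxDeg F + Nat.choose (n - 3) (r - 2) →
    ∃ x ∈ Finset.range n, ∃ y ∈ Finset.range n, ∃ z ∈ Finset.range n,
      x ≠ y ∧ x ≠ z ∧ y ≠ z ∧
      (∀ E ∈ F, 2 ≤ (E ∩ ({x, y, z} : Finset ℕ)).card) ∧
      ∃ G : Finset (Finset ℕ), F ⊆ G ∧ (G \ F).card ≤ 3 * t ∧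
        ((Finset.range n).powersetCard r
          |>.filter fun E => (E ∩ ({x, y, z} : Finset ℕ)).card = 2) ⊆ G ∧
        G ⊆ ((Finset.range n).powersetCard r
          |>.filter fun E => 2 ≤ (E ∩ ({x, y, z} : Finset ℕ)).card) :=
  stmt16_general r hr ε hε2
end
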